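/- Under the hypotheses of Theorem 1, if the maximal coefficient degree at step k is attained first at index l = 1 (i.e. deg A_{k,1} ≥ deg A_{k,j} for all j), then deg A_{k+1,m} = deg A_{k,1} + S + 1 and deg A_{k+1,h} ≤ deg A_{k,1} + S < deg A_{k+1,m} for all h ≤ m-1. -/

import Mathlib

/-!
`X * derivative` never raises the degree and multiplication by `N` raises it by exactly `S`,
so in the recurrence for `A_{k+1,j}` every term has degree at most `deg A_{k,1} + S`, except
`P_m A_{k,1}` in the last row, whose degree is exactly `deg A_{k,1} + S + 1` and dominates.
-/

open Polynomial

namespace WithBot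

theorem le_of_lt_add_one {x y : WithBot ℕ} (h : x < y + 1) : x ≤ y :=
  (WithBot.add_le_add_iff_right one_ne_bot).mp (Nat.WithBot.add_one_le_of_lt h)

theorem lt_add_one_of_ne_bot {x : WithBot ℕ} (hx : x ≠ ⊥) : x < x + 1 := by
  obtain ⟨n, rfl⟩ := ne_bot_iff_exists.mp hx
  exact WithBot.coe_lt_coe.mpr n.lt_succ_self

end WithBot

namespace Polynomial

variable {R : Type*} [Semiring R]

theorem degree_X_mul_derivative_le (p : R[X]) : (X * derivative p).degree ≤ p.degree := by
  rcases eq_or_ne p 0 with rfl | hp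
  · simp
  calc (X * derivative p).degree ≤ 1 + (derivative p).degree :=
        degree_mul_le_of_le degree_X_le le_rfl
    _ = (derivative p).degree + 1 := add_comm _ _
    _ ≤ p.degree := Nat.WithBot.add_one_le_of_lt (degree_derivative_lt hp)

theorem degree_mul_X_mul_derivative_le (N q : R[X]) :
    (N * (X * derivative q)).degree ≤ N.degree + q.degree :=
  degree_mul_le_of_le le_rfl (degree_X_mul_derivative_le q)

theorem degree_mul_add_mul_X_mul_derivative_eq [NoZeroDivisors R] {N P a q : R[X]}
    (hN : N ≠ 0) (ha : a ≠ 0) (hP : P.degree = N.degree + 1) (hq : q.degree ≤ a.degree) :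
    (P * a + N * (X * derivative q)).degree = a.degree + N.degree + 1 := by
  have hPa : (P * a).degree = a.degree + N.degree + 1 := by
    rw [degree_mul, hP]
    ac_rfl
  have hfinite : a.degree + N.degree ≠ ⊥ :=
    WithBot.add_ne_bot.mpr ⟨degree_ne_bot.mpr ha, degree_ne_bot.mpr hN⟩
  rw [degree_add_eq_left_of_degree_lt, hPa]
  calc (N * (X * derivative q)).degree ≤ N.degree + a.degree :=
        (degree_mul_X_mul_derivative_le N q).trans (add_le_add_right hq _)
    _ = a.degree + N.degree := add_comm _ _
    _ < (P * a).degree := hPa ▸ WithBot.lt_add_one_of_ne_bot hfinite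

theorem degree_mul_add_mul_X_mul_derivative_add_mul_le {N P a q r : R[X]}
    (hP : P.degree < N.degree + 1) (hq : q.degree ≤ a.degree) (hr : r.degree ≤ a.degree) :
    (P * a + N * (X * derivative q) + N * r).degree ≤ a.degree + N.degree := by
  rw [add_comm a.degree]
  refine (degree_add_le _ _).trans (max_le ((degree_add_le _ _).trans (max_le ?_ ?_)) ?_)
  · exact degree_mul_le_of_le (WithBot.le_of_lt_add_one hP) le_rfl
  · exact (degree_mul_X_mul_derivative_le N q).trans (add_le_add_right hq _)
  · exact degree_mul_le_of_le le_rfl hr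

end Polynomial

/-- **Degree step, case `l = 1`** (formula (220) of the paper). Under the hypotheses of
Theorem 1, if the maximal coefficient degree at step `k` is attained first at index `l = 1`
(i.e. `deg A_{k,1} ≥ deg A_{k,j}` for all `j`, with `deg A_{k,1}` finite), then
`deg A_{k+1,m} = deg A_{k,1} + S + 1` and for all `h ≤ m-1`,
`deg A_{k+1,h} ≤ deg A_{k,1} + S < deg A_{k+1,m}`.
(`A n j` with `j : Fin m` stands for `A_{n,j+1}`.) -/
theorem stmt5 (K : Type*) [Field K]
    (m : ℕ) (hm : 2 ≤ m)
    (N : Polynomial K) (P : Fin m → Polynomial K)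
    (hN : N ≠ 0)
    (hPm : (P ⟨m - 1, by omega⟩).degree = N.degree + 1)
    (hPj : ∀ j : Fin m, (j : ℕ) + 1 < m → (P j).degree < N.degree + 1)
    (A : ℕ → Fin m → Polynomial K)
    (hrec : ∀ k : ℕ, ∀ j : Fin m, ∀ h : (j : ℕ) + 1 < m,
      A (k + 1) j = P j * A k ⟨0, by omega⟩
        + N * (X * derivative (A k j)) + N * A k ⟨(j : ℕ) + 1, h⟩)
    (hrecm : ∀ k : ℕ,
      A (k + 1) ⟨m - 1, by omega⟩ = P ⟨m - 1, by omega⟩ * A k ⟨0, by omega⟩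
        + N * (X * derivative (A k ⟨m - 1, by omega⟩)))
    (k : ℕ)
    (hd1 : A k ⟨0, by omega⟩ ≠ 0)
    (hmax : ∀ j : Fin m, (A k j).degree ≤ (A k ⟨0, by omega⟩).degree) :
    (A (k + 1) ⟨m - 1, by omega⟩).degree = (A k ⟨0, by omega⟩).degree + N.degree + 1 ∧
    (∀ h : Fin m, (h : ℕ) + 1 < m →
      (A (k + 1) h).degree ≤ (A k ⟨0, by omega⟩).degree + N.degree ∧
      (A k ⟨0, by omega⟩).degree + N.degree < (A (k + 1) ⟨m - 1, by omega⟩).degree) := by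
  have hlast : (A (k + 1) ⟨m - 1, by omega⟩).degree
      = (A k ⟨0, by omega⟩).degree + N.degree + 1 := by
    rw [hrecm k]
    exact degree_mul_add_mul_X_mul_derivative_eq hN hd1 hPm (hmax _)
  refine ⟨hlast, fun h hh => ⟨?_, ?_⟩⟩
  · rw [hrec k h hh]
    exact degree_mul_add_mul_X_mul_derivative_add_mul_le (hPj h hh) (hmax h) (hmax _)
  · rw [hlast]
    exact WithBot.lt_add_one_of_ne_bot
      (WithBot.add_ne_bot.mpr ⟨degree_ne_bot.mpr hd1, degree_ne_bot.mpr hN⟩)
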